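/- arXiv:2212.05719 — 2 statements merged into one kernel-verified Lean document; each statement's English description precedes it below -/
import Mathlib

section
/- Let θ ∈ (0,1), μ, C, ρ > 0 and let (a_k), (b_k) be nonnegative sequences with b_k ≥ F* such that a_k represents ‖Z^k − Z^{k-1}‖ and b_k = F(Z^k) is nonincreasing to F*. If for each k: (b_k − F*)^θ ≤ μ C a_k, and b_k − b_{k+1} ≥ (δ/2) a_{k+1}² with δ > 0, then 2a_{k+1} ≤ (2C/δ)(h(b_k) − h(b_{k+1})) + a_k, where h(s) = (μ/(1-θ))(s − F*)^{1-θ}. Summing, Σ_{j=k}^∞ a_{j+1} ≤ a_k + (2C/(δ(1-θ))) μ (b_k − F*)^{1-θ}. -/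
lemma concave_rpow_aux {x y p : ℝ} (hx : 0 < x) (hy : 0 ≤ y) (hyx : y ≤ x)
    (hp1 : 0 < p) (hp2 : p ≤ 1) :
    p * x ^ (p - 1) * (x - y) ≤ x ^ p - y ^ p := by
  have hs : -1 ≤ y / x - 1 := by
    have : 0 ≤ y / x := div_nonneg hy hx.le
    linarith
  have hb := rpow_one_add_le_one_add_mul_self (s := y / x - 1) hs hp1.le hp2
  rw [show (1 : ℝ) + (y / x - 1) = y / x by ring] at hb
  have hb2 : (y / x) ^ p * x ^ p ≤ (1 + p * (y / x - 1)) * x ^ p :=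
    mul_le_mul_of_nonneg_right hb (Real.rpow_nonneg hx.le _)
  rw [← Real.mul_rpow (div_nonneg hy hx.le) hx.le, div_mul_cancel₀ _ hx.ne'] at hb2
  have hxp : x ^ (p - 1) = x ^ p / x := by
    rw [Real.rpow_sub hx, Real.rpow_one]
  have key : (1 + p * (y / x - 1)) * x ^ p = x ^ p - p * (x ^ p / x) * (x - y) := by
    field_simp
    ring
  rw [key] at hb2
  rw [hxp]
  linarith

theorem stmt10 (θ μ C δ Fstar : ℝ) (hθ1 : 0 < θ) (hθ2 : θ < 1) (hμ : 0 < μ)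
    (hC : 0 < C) (hδ : 0 < δ) (a b : ℕ → ℝ) (ha : ∀ k, 0 ≤ a k)
    (hbge : ∀ k, Fstar ≤ b k) (hbmono : ∀ k, b (k + 1) ≤ b k)
    (hblim : Filter.Tendsto b Filter.atTop (nhds Fstar))
    (hKL : ∀ k, (b k - Fstar) ^ θ ≤ μ * C * a k)
    (hdec : ∀ k, δ / 2 * a (k + 1) ^ 2 ≤ b k - b (k + 1)) :
    (∀ k, 2 * a (k + 1) ≤
        2 * C / δ * (μ / (1 - θ) * (b k - Fstar) ^ (1 - θ) -
          μ / (1 - θ) * (b (k + 1) - Fstar) ^ (1 - θ)) + a k) ∧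
    ∀ k, (∑' j : ℕ, a (k + 1 + j)) ≤
        a k + 2 * C / (δ * (1 - θ)) * μ * (b k - Fstar) ^ (1 - θ) := by
  have hθ' : 0 < 1 - θ := by linarith
  have part1 : ∀ k, 2 * a (k + 1) ≤
      2 * C / δ * (μ / (1 - θ) * (b k - Fstar) ^ (1 - θ) -
        μ / (1 - θ) * (b (k + 1) - Fstar) ^ (1 - θ)) + a k := by
    intro k
    have hr0 : 0 ≤ b k - Fstar := by linarith [hbge k]
    have hr10 : 0 ≤ b (k + 1) - Fstar := by linarith [hbge (k + 1)]
    have hle : b (k + 1) - Fstar ≤ b k - Fstar := by linarith [hbmono k]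
    rcases eq_or_lt_of_le hr0 with heq | hpos
    · -- b k - Fstar = 0
      have h1 : b (k + 1) - Fstar = 0 := le_antisymm (by linarith) hr10
      have h2 : a (k + 1) = 0 := by
        have hd := hdec k
        have hsq : a (k + 1) ^ 2 ≤ 0 := by nlinarith
        have hsq2 : a (k + 1) ^ 2 = 0 := le_antisymm hsq (sq_nonneg _)
        exact pow_eq_zero_iff (two_ne_zero) |>.mp hsq2
      rw [h2, ← heq, h1, Real.zero_rpow (by linarith : (1 : ℝ) - θ ≠ 0)]
      simp
      linarith [ha k]
    · -- 0 < b k - Fstar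
      have hP : 0 < (b k - Fstar) ^ θ := Real.rpow_pos_of_pos hpos θ
      have hak : 0 < a k := by
        have := hKL k
        nlinarith [mul_pos hμ hC]
    -- Bernoulli / concavity
      have hD := concave_rpow_aux hpos hr10 hle hθ' (by linarith : (1:ℝ) - θ ≤ 1)
      rw [show (1 : ℝ) - θ - 1 = -θ by ring] at hD
      have hQ : (b k - Fstar) ^ (-θ) = ((b k - Fstar) ^ θ)⁻¹ := Real.rpow_neg hr0 θ
      have hQpos : 0 < (b k - Fstar) ^ (-θ) := Real.rpow_pos_of_pos hpos _
      set P := (b k - Fstar) ^ θ with hPdef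
      set Q := (b k - Fstar) ^ (-θ) with hQdef
      set X := (b k - Fstar) ^ (1 - θ) with hXdef
      set Y := (b (k + 1) - Fstar) ^ (1 - θ) with hYdef
      -- h6 : 1 / a k ≤ C * μ * Q
      have h6 : 1 / a k ≤ C * μ * Q := by
        rw [hQ]
        rw [div_le_iff₀ hak]
        calc 1 = P * P⁻¹ := by rw [mul_inv_cancel₀ hP.ne']
          _ ≤ (μ * C * a k) * P⁻¹ := by
              apply mul_le_mul_of_nonneg_right (hKL k) (by positivity)
          _ = C * μ * P⁻¹ * a k := by ring
      have c1 : μ * Q * (δ / 2 * a (k + 1) ^ 2) ≤ μ * Q * ((b k - Fstar) - (b (k+1) - Fstar)) := by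
        apply mul_le_mul_of_nonneg_left _ (by positivity)
        have := hdec k
        linarith
      have c2 : μ * Q * ((b k - Fstar) - (b (k+1) - Fstar)) =
          μ / (1 - θ) * ((1 - θ) * Q * ((b k - Fstar) - (b (k+1) - Fstar))) := by
        field_simp
      have c3 : μ / (1 - θ) * ((1 - θ) * Q * ((b k - Fstar) - (b (k+1) - Fstar))) ≤
          μ / (1 - θ) * (X - Y) :=
        mul_le_mul_of_nonneg_left hD (by positivity)
      have c4 : μ * Q * (δ / 2 * a (k + 1) ^ 2) ≤ μ / (1 - θ) * (X - Y) := by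
        rw [c2] at c1; linarith
      have c5 : 2 * C / δ * (μ * Q * (δ / 2 * a (k + 1) ^ 2)) ≤
          2 * C / δ * (μ / (1 - θ) * (X - Y)) :=
        mul_le_mul_of_nonneg_left c4 (by positivity)
      have c6 : 2 * C / δ * (μ * Q * (δ / 2 * a (k + 1) ^ 2)) = C * μ * Q * a (k + 1) ^ 2 := by
        field_simp
      have c7 : 1 / a k * a (k + 1) ^ 2 ≤ C * μ * Q * a (k + 1) ^ 2 :=
        mul_le_mul_of_nonneg_right h6 (sq_nonneg _)
      have c8 : 2 * a (k + 1) - a k ≤ 1 / a k * a (k + 1) ^ 2 := by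
        rw [one_div, inv_mul_eq_div, le_div_iff₀ hak]
        nlinarith [sq_nonneg (a (k + 1) - a k)]
      have goal_eq : 2 * C / δ * (μ / (1 - θ) * X - μ / (1 - θ) * Y) =
          2 * C / δ * (μ / (1 - θ) * (X - Y)) := by ring
      rw [goal_eq]
      rw [c6] at c5
      linarith
  refine ⟨part1, ?_⟩
  intro k
  set g : ℕ → ℝ := fun j => 2 * C / δ * (μ / (1 - θ) * (b j - Fstar) ^ (1 - θ)) with hg
  have hgnonneg : ∀ j, 0 ≤ g j := by
    intro j
    have : (0:ℝ) ≤ (b j - Fstar) ^ (1 - θ) := Real.rpow_nonneg (by linarith [hbge j]) _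
    positivity
  have hpn : ∀ n, (∑ j ∈ Finset.range n, a (k + 1 + j)) + a (k + n) ≤ a k + g k - g (k + n) := by
    intro n
    induction n with
    | zero => simp
    | succ n ih =>
      rw [Finset.sum_range_succ]
      have hidx : k + 1 + n = k + n + 1 := by omega
      rw [hidx, show k + (n + 1) = k + n + 1 from by omega]
      have h1 := part1 (k + n)
      have h1' : 2 * a (k + n + 1) ≤ g (k + n) - g (k + n + 1) + a (k + n) := by
        simpa [hg, mul_sub] using h1
      linarith
  have hbound : ∀ n, (∑ j ∈ Finset.range n, a (k + 1 + j)) ≤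
      a k + 2 * C / (δ * (1 - θ)) * μ * (b k - Fstar) ^ (1 - θ) := by
    intro n
    have h1 := hpn n
    have h2 := hgnonneg (k + n)
    have h3 := ha (k + n)
    have heq : g k = 2 * C / (δ * (1 - θ)) * μ * (b k - Fstar) ^ (1 - θ) := by
      simp only [hg]
      have hδ0 : δ ≠ 0 := hδ.ne'
      have hθ0 : (1 : ℝ) - θ ≠ 0 := hθ'.ne'
      field_simp
    linarith [heq ▸ h1]
  exact Real.tsum_le_of_sum_range_le (fun n => ha _) hbound
end

section
/- Fix λ > 0, γ ≥ 0, and 0 < p < 1, and consider φ(s) = λ|s|^p + ((1+γ)/2)(s − h)² for a given real h. Define b̄ = (2λ(1-p)/(1+γ))^{1/(2-p)} and μ* = b̄ + λ p b̄^{p-1}/(1+γ). If |h| < μ*, then s = 0 is the unique global minimizer of φ. -/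
theorem stmt12 (lam γ p h : ℝ) (hlam : 0 < lam) (hγ : 0 ≤ γ) (hp1 : 0 < p) (hp2 : p < 1)
    (bbar : ℝ) (hbbar : bbar = (2 * lam * (1 - p) / (1 + γ)) ^ ((1 : ℝ) / (2 - p)))
    (μstar : ℝ) (hμstar : μstar = bbar + lam * p * bbar ^ (p - 1) / (1 + γ))
    (hh : |h| < μstar) :
    ∀ s : ℝ, s ≠ 0 →
      lam * |(0 : ℝ)| ^ p + (1 + γ) / 2 * ((0 : ℝ) - h) ^ 2 <
        lam * |s| ^ p + (1 + γ) / 2 * (s - h) ^ 2 := by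
  have hγ1 : (0 : ℝ) < 1 + γ := by linarith
  have h1p : (0 : ℝ) < 1 - p := by linarith
  have hQ : (0 : ℝ) < 2 - p := by linarith
  have hbase : (0 : ℝ) < 2 * lam * (1 - p) / (1 + γ) := by positivity
  have hbpos : 0 < bbar := by rw [hbbar]; positivity
  have key1 : bbar ^ (2 - p) = 2 * lam * (1 - p) / (1 + γ) := by
    rw [hbbar, ← Real.rpow_mul hbase.le, one_div, inv_mul_cancel₀ hQ.ne', Real.rpow_one]
  have hsplit : bbar ^ (2 - p) * bbar ^ (p - 1) = bbar := by
    rw [← Real.rpow_add hbpos]; norm_num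
  have hbp1 : (0 : ℝ) < bbar ^ (p - 1) := Real.rpow_pos_of_pos hbpos _
  have key2 : lam * bbar ^ (p - 1) / (1 + γ) = bbar / (2 * (1 - p)) := by
    rw [key1] at hsplit
    field_simp at hsplit ⊢
    nlinarith [hsplit]
  have hμ : μstar = bbar * (2 - p) / (2 * (1 - p)) := by
    rw [hμstar]
    have h2 : lam * p * bbar ^ (p - 1) / (1 + γ) = p * (bbar / (2 * (1 - p))) := by
      rw [← key2]; ring
    rw [h2]; field_simp; ring
  have h4 : bbar ^ (2 - p) = bbar * bbar ^ (1 - p) := by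
    rw [show (2 : ℝ) - p = 1 + (1 - p) by ring, Real.rpow_add hbpos, Real.rpow_one]
  have h5 : bbar ^ (1 - p) * bbar ^ (p - 1) = 1 := by
    rw [← Real.rpow_add hbpos]; norm_num
  have h6 : bbar ^ (1 - p) = (bbar ^ (p - 1))⁻¹ := eq_inv_of_mul_eq_one_left h5
  -- main pointwise bound: for t > 0, μstar ≤ lam * t^(p-1)/(1+γ) + t/2
  have main : ∀ t : ℝ, 0 < t → μstar ≤ lam * t ^ (p - 1) / (1 + γ) + t / 2 := by
    intro t ht
    set r : ℝ := t / bbar with hr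
    have hrpos : 0 < r := div_pos ht hbpos
    have hwsum : 1 / (2 - p) + (1 - p) / (2 - p) = 1 := by
      rw [← add_div, show (1 : ℝ) + (1 - p) = 2 - p by ring, div_self hQ.ne']
    have amgm := Real.geom_mean_le_arith_mean2_weighted
      (le_of_lt (by positivity : (0:ℝ) < 1 / (2 - p)))
      (le_of_lt (by positivity : (0:ℝ) < (1 - p) / (2 - p)))
      (le_of_lt (Real.rpow_pos_of_pos hrpos (p - 1))) hrpos.le hwsum
    have hexp0 : (p - 1) * (1 / (2 - p)) + (1 - p) / (2 - p) = 0 := by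
      field_simp; ring
    have hlhs : (r ^ (p - 1)) ^ (1 / (2 - p) : ℝ) * r ^ ((1 - p) / (2 - p) : ℝ) = 1 := by
      rw [← Real.rpow_mul hrpos.le, ← Real.rpow_add hrpos, hexp0, Real.rpow_zero]
    rw [hlhs] at amgm
    have hq : 2 - p ≤ r ^ (p - 1) + (1 - p) * r := by
      have h2 : (2 - p) * 1 ≤ (2 - p) * (1 / (2 - p) * r ^ (p - 1) + (1 - p) / (2 - p) * r) :=
        mul_le_mul_of_nonneg_left amgm hQ.le
      calc 2 - p = (2 - p) * 1 := by ring
        _ ≤ (2 - p) * (1 / (2 - p) * r ^ (p - 1) + (1 - p) / (2 - p) * r) := h2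
        _ = r ^ (p - 1) + (1 - p) * r := by field_simp
    have hrp : r ^ (p - 1) = t ^ (p - 1) / bbar ^ (p - 1) :=
      Real.div_rpow ht.le hbpos.le _
    have h3 : lam / (1 + γ) = bbar ^ (2 - p) / (2 * (1 - p)) := by
      rw [key1]; field_simp
    have hcoef : lam * t ^ (p - 1) / (1 + γ)
        = bbar / (2 * (1 - p)) * (t ^ (p - 1) / bbar ^ (p - 1)) := by
      calc lam * t ^ (p - 1) / (1 + γ) = lam / (1 + γ) * t ^ (p - 1) := by ring
        _ = bbar ^ (2 - p) / (2 * (1 - p)) * t ^ (p - 1) := by rw [h3]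
        _ = bbar / (2 * (1 - p)) * (t ^ (p - 1) * bbar ^ (1 - p)) := by rw [h4]; ring
        _ = bbar / (2 * (1 - p)) * (t ^ (p - 1) / bbar ^ (p - 1)) := by
            rw [h6]; ring
    rw [hμ, hcoef]
    rw [hrp] at hq
    have hmul := mul_le_mul_of_nonneg_left hq
      (le_of_lt (by positivity : (0:ℝ) < bbar / (2 * (1 - p))))
    have hexp : bbar / (2 * (1 - p)) * ((1 - p) * r) = t / 2 := by
      rw [hr]; field_simp
    calc bbar * (2 - p) / (2 * (1 - p)) = bbar / (2 * (1 - p)) * (2 - p) := by ring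
      _ ≤ bbar / (2 * (1 - p)) * (t ^ (p - 1) / bbar ^ (p - 1) + (1 - p) * r) := hmul
      _ = bbar / (2 * (1 - p)) * (t ^ (p - 1) / bbar ^ (p - 1)) + t / 2 := by
          rw [mul_add, hexp]
  intro s hs
  have ht : 0 < |s| := abs_pos.mpr hs
  have h0 : |(0 : ℝ)| ^ p = 0 := by
    rw [abs_zero]; exact Real.zero_rpow hp1.ne'
  rw [h0]
  have hsub := Real.rpow_sub ht p 1
  rw [Real.rpow_one] at hsub
  have htp : |s| ^ p = |s| ^ (p - 1) * |s| := by
    rw [hsub]; field_simp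
  have hmain := main |s| ht
  have hstep : (1 + γ) * (|s| * μstar) ≤ lam * |s| ^ p + (1 + γ) / 2 * |s| ^ 2 := by
    have hmm := mul_le_mul_of_nonneg_left hmain (le_of_lt (mul_pos hγ1 ht))
    calc (1 + γ) * (|s| * μstar) = (1 + γ) * |s| * μstar := by ring
      _ ≤ (1 + γ) * |s| * (lam * |s| ^ (p - 1) / (1 + γ) + |s| / 2) := hmm
      _ = lam * (|s| ^ (p - 1) * |s|) + (1 + γ) / 2 * |s| ^ 2 := by
          field_simp
      _ = lam * |s| ^ p + (1 + γ) / 2 * |s| ^ 2 := by rw [← htp]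
  have hsh : s * h ≤ |s| * |h| := by
    calc s * h ≤ |s * h| := le_abs_self _
      _ = |s| * |h| := abs_mul s h
  have hhl : (1 + γ) * (|s| * |h|) < (1 + γ) * (|s| * μstar) := by
    apply mul_lt_mul_of_pos_left _ hγ1
    exact mul_lt_mul_of_pos_left hh ht
  have hsq : |s| ^ 2 = s ^ 2 := sq_abs s
  nlinarith [hstep, hsh, hhl, hsq, hγ1]
end
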